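/- arXiv:1805.10579 — 4 statements merged into one kernel-verified Lean document; each statement's English description precedes it below -/
import Mathlib

section
/- Let 0 < μ = λ₁ ≤ ... ≤ λ_d = L, α ∈ (0, 2/L), ρ(α) = max{|1-αμ|, |1-αL|}, and J(α) = α Σ_{i=1}^d 1/(2(2-αλᵢ)). Then J(α) ≥ (1-ρ(α)²) Σ_{i=1}^d 1/(8λᵢ). -/
theorem stmt_6 {d : ℕ} (μ L : ℝ) (lam : Fin (d + 1) → ℝ)
    (hμ : 0 < μ) (hmono : Monotone lam) (h0 : lam 0 = μ) (hlast : lam (Fin.last d) = L)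
    (α : ℝ) (hα : α ∈ Set.Ioo (0 : ℝ) (2 / L)) :
    α * ∑ i, 1 / (2 * (2 - α * lam i)) ≥
      (1 - (max |1 - α * μ| |1 - α * L|) ^ 2) * ∑ i, 1 / (8 * lam i) := by
  obtain ⟨hα0, hα2⟩ := hα
  have hL : 0 < L := by
    rw [← hlast]; rw [← h0] at hμ; exact lt_of_lt_of_le hμ (hmono (Fin.zero_le _))
  have hαL : α * L < 2 := by
    rw [lt_div_iff₀ hL] at hα2; linarith
  rw [ge_iff_le, Finset.mul_sum, Finset.mul_sum]
  apply Finset.sum_le_sum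
  intro i _
  have hμi : μ ≤ lam i := by rw [← h0]; exact hmono (Fin.zero_le _)
  have hiL : lam i ≤ L := by rw [← hlast]; exact hmono (Fin.le_last _)
  have hlami : 0 < lam i := lt_of_lt_of_le hμ hμi
  have hx : 0 < α * lam i := mul_pos hα0 hlami
  have h2x : 0 < 2 - α * lam i := by
    have : α * lam i ≤ α * L := by nlinarith
    linarith
  set ρ := max |1 - α * μ| |1 - α * L| with hρdef
  have hρ : |1 - α * lam i| ≤ ρ := by
    rcases abs_le.mp (le_refl |1 - α * lam i|) with ⟨h1, h2⟩
    rw [abs_le]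
    constructor
    · have : -(|1 - α * L|) ≤ 1 - α * L := neg_abs_le _
      have hle : α * lam i ≤ α * L := by nlinarith
      calc -ρ ≤ -(|1 - α * L|) := by simp [hρdef]
        _ ≤ 1 - α * L := neg_abs_le _
        _ ≤ 1 - α * lam i := by linarith
    · have hle : α * μ ≤ α * lam i := by nlinarith
      calc 1 - α * lam i ≤ 1 - α * μ := by linarith
        _ ≤ |1 - α * μ| := le_abs_self _
        _ ≤ ρ := le_max_left _ _
  have hρ2 : (1 - α * lam i) ^ 2 ≤ ρ ^ 2 := by
    rw [← sq_abs]
    exact pow_le_pow_left₀ (abs_nonneg _) hρ 2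
  rw [mul_one_div, mul_one_div, div_le_div_iff₀ (by positivity) (by positivity)]
  nlinarith [mul_pos hx (mul_pos h2x h2x), sq_nonneg (2 - α * lam i),
    mul_nonneg hx.le (sq_nonneg (α * lam i)), mul_pos hx h2x]
end

section
/- Let λ > 0, α ≥ 0, β ≥ 0 with 1-αλ < 0 and Δ := (1+β)²(1-αλ)² - 4β(1-αλ) > 0. Set c = -(1-αλ) > 0. Then ½(1+β)c + ½√Δ ≤ 1 if and only if c ≤ 1/(2β+1). -/
theorem stmt_9 (lam α β : ℝ) (hlam : 0 < lam) (hα : 0 ≤ α) (hβ : 0 ≤ β)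
    (hneg : 1 - α * lam < 0)
    (hΔ : (1 + β) ^ 2 * (1 - α * lam) ^ 2 - 4 * β * (1 - α * lam) > 0) :
    (1 + β) * (-(1 - α * lam)) / 2 +
        Real.sqrt ((1 + β) ^ 2 * (1 - α * lam) ^ 2 - 4 * β * (1 - α * lam)) / 2 ≤ 1 ↔
      -(1 - α * lam) ≤ 1 / (2 * β + 1) := by
  set c : ℝ := -(1 - α * lam) with hcdef
  have hc : 0 < c := by simp [hcdef]; linarith
  set Δ : ℝ := (1 + β) ^ 2 * (1 - α * lam) ^ 2 - 4 * β * (1 - α * lam) with hΔdef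
  have hsq : Real.sqrt Δ ^ 2 = Δ := Real.sq_sqrt hΔ.le
  have hsn : 0 ≤ Real.sqrt Δ := Real.sqrt_nonneg Δ
  have hd : (0:ℝ) < 2 * β + 1 := by linarith
  constructor
  · intro h
    rw [le_div_iff₀ hd]
    nlinarith [hsq, hsn, h, hc]
  · intro h
    rw [le_div_iff₀ hd] at h
    have h2 : Real.sqrt Δ ≤ 2 - (1 + β) * c := by
      have hx : 0 ≤ 2 - (1 + β) * c := by nlinarith
      have hΔle : Δ ≤ (2 - (1 + β) * c) ^ 2 := by
        have : (1 - α * lam) = -c := by linarith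
        rw [hΔdef, this]; nlinarith
      calc Real.sqrt Δ ≤ Real.sqrt ((2 - (1 + β) * c) ^ 2) := Real.sqrt_le_sqrt hΔle
        _ = 2 - (1 + β) * c := by rw [Real.sqrt_sq hx]
    nlinarith [h2, hc, hβ, hsn]
end

section
/- Let γ ≥ 2 and α > 0. The function q(t) = (α/2)·(1+t)/((1-t)(1+γt)) is convex on the open interval (-1/γ, 1). -/
open Set

lemma convexOn_congr' {s : Set ℝ} {f g : ℝ → ℝ} (hf : ConvexOn ℝ s f)
    (h : ∀ x ∈ s, f x = g x) : ConvexOn ℝ s g := by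
  refine ⟨hf.1, fun x hx y hy a b ha hb hab => ?_⟩
  rw [← h x hx, ← h y hy, ← h _ (hf.1 hx hy ha hb hab)]
  exact hf.2 hx hy ha hb hab

lemma inv_convexOn : ConvexOn ℝ (Ioi (0:ℝ)) fun x => x⁻¹ := by
  have := (strictConvexOn_zpow (m := -1) (by norm_num) (by norm_num)).convexOn
  simpa using this

noncomputable def affMap (a b : ℝ) : ℝ →ᵃ[ℝ] ℝ where
  toFun := fun t => a + b * t
  linear := b • LinearMap.id
  map_vadd' := by intro p v; simp [mul_add]; ring

lemma inv_affine_convexOn (a b : ℝ) :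
    ConvexOn ℝ ((fun t : ℝ => a + b * t) ⁻¹' Ioi 0) (fun t : ℝ => (a + b * t)⁻¹) := by
  have := inv_convexOn.comp_affineMap (affMap a b)
  simpa [affMap, Function.comp_def] using this

theorem stmt_12 (γ α : ℝ) (hγ : 2 ≤ γ) (hα : 0 < α) :
    ConvexOn ℝ (Set.Ioo (-(1 / γ)) 1)
      (fun t : ℝ => α / 2 * ((1 + t) / ((1 - t) * (1 + γ * t)))) := by
  have hγ0 : 0 < γ := by linarith
  have key : ∀ t : ℝ, t ∈ Ioo (-(1 / γ)) 1 → -1 < γ * t := by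
    intro t ht
    have h : (-1) / γ < t := by rw [neg_div]; exact ht.1
    have := (div_lt_iff₀ hγ0).mp h
    linarith [mul_comm t γ]
  have h1 : ConvexOn ℝ (Ioo (-(1 / γ)) 1) (fun t : ℝ => (1 + (-1) * t)⁻¹) := by
    refine (inv_affine_convexOn 1 (-1)).subset ?_ (convex_Ioo _ _)
    intro t ht
    simp only [mem_preimage, mem_Ioi]
    have := ht.2
    linarith
  have h2 : ConvexOn ℝ (Ioo (-(1 / γ)) 1) (fun t : ℝ => (1 + γ * t)⁻¹) := by
    refine (inv_affine_convexOn 1 γ).subset ?_ (convex_Ioo _ _)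
    intro t ht
    simp only [mem_preimage, mem_Ioi]
    linarith [key t ht]
  have hc1 : (0:ℝ) ≤ α / 2 * (2 / (γ + 1)) := by positivity
  have hc2 : (0:ℝ) ≤ α / 2 * ((γ - 1) / (γ + 1)) := by
    have : (0:ℝ) ≤ (γ - 1) / (γ + 1) := by
      apply div_nonneg <;> linarith
    positivity
  have hsum := (h1.smul hc1).add (h2.smul hc2)
  refine convexOn_congr' hsum ?_
  intro t ht
  have ha : (1 : ℝ) - t ≠ 0 := by have := ht.2; intro h; linarith [sub_eq_zero.mp h]
  have hb : (1 : ℝ) + γ * t ≠ 0 := by have := key t ht; intro hz; linarith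
  have hγ1 : γ + 1 ≠ 0 := by linarith
  have e : (1 : ℝ) + (-1) * t = 1 - t := by ring
  simp only [Pi.add_apply, smul_eq_mul, e]
  field_simp
  ring
end

section
/- Let 0 < μ ≤ L, κ = L/μ, and ε ∈ (0, 2/(κ-1)). The equation max{|1-αμ|, |1-αL|} = (1+ε)·(κ-1)/(κ+1) has exactly two solutions in α ∈ (0, 2/L), namely α = (2 - ε(κ-1))/(L+μ) and α = (2 + ε(κ-1)/κ)/(L+μ), and the first is strictly smaller than the second. -/
theorem stmt_16 (μ L κ ε : ℝ) (hμ : 0 < μ) (hμL : μ ≤ L) (hκ : κ = L / μ)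
    (hε : 0 < ε) (hε' : ε < 2 / (κ - 1)) :
    (2 - ε * (κ - 1)) / (L + μ) ∈ Set.Ioo (0 : ℝ) (2 / L) ∧
    (2 + ε * (κ - 1) / κ) / (L + μ) ∈ Set.Ioo (0 : ℝ) (2 / L) ∧
    (2 - ε * (κ - 1)) / (L + μ) < (2 + ε * (κ - 1) / κ) / (L + μ) ∧
    (∀ α ∈ Set.Ioo (0 : ℝ) (2 / L),
      (max |1 - α * μ| |1 - α * L| = (1 + ε) * ((κ - 1) / (κ + 1)) ↔
        α = (2 - ε * (κ - 1)) / (L + μ) ∨ α = (2 + ε * (κ - 1) / κ) / (L + μ))) := by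
  subst hκ
  have hL0 : 0 < L := lt_of_lt_of_le hμ hμL
  have hL : μ < L := by
    rcases lt_or_eq_of_le hμL with h | h
    · exact h
    · exfalso
      rw [← h, div_self hμ.ne'] at hε'
      norm_num at hε'
      linarith
  have hd : 0 < L - μ := by linarith
  have hS : 0 < L + μ := by linarith
  have hk1 : L / μ - 1 = (L - μ) / μ := by field_simp
  have hεb : ε * (L - μ) < 2 * μ := by
    rw [hk1, div_div_eq_mul_div, lt_div_iff₀ hd] at hε'
    linarith
  have hnum1 : 0 < 2 - ε * (L / μ - 1) := by
    rw [hk1]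
    rw [sub_pos, mul_div_assoc', div_lt_iff₀ hμ]
    linarith
  have hk2 : ε * (L / μ - 1) / (L / μ) = ε * (L - μ) / L := by
    rw [hk1]; field_simp
  have hnum2 : (0:ℝ) < 2 + ε * (L / μ - 1) / (L / μ) := by
    rw [hk2]; positivity
  refine ⟨⟨div_pos hnum1 hS, ?_⟩, ⟨div_pos hnum2 hS, ?_⟩, ?_, ?_⟩
  · rw [div_lt_div_iff₀ hS hL0, hk1]
    have : 0 ≤ ε * ((L - μ) / μ) * L := by positivity
    nlinarith
  · rw [div_lt_div_iff₀ hS hL0, hk2]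
    have h3 : (2 + ε * (L - μ) / L) * L = 2 * L + ε * (L - μ) := by
      field_simp
    linarith
  · rw [div_lt_div_iff₀ hS hS]
    have h1 : 0 < ε * (L / μ - 1) := by
      rw [hk1]; positivity
    have h2 : 0 ≤ ε * (L / μ - 1) / (L / μ) := by
      rw [hk2]; positivity
    nlinarith
  · rintro α ⟨hα0, hα2⟩
    have hml : α * μ ≤ α * L := mul_le_mul_of_nonneg_left hμL hα0.le
    have key : max |1 - α * μ| |1 - α * L| = max (1 - α * μ) (α * L - 1) := by
      rcases abs_cases (1 - α * μ) with ⟨h1, h1'⟩ | ⟨h1, h1'⟩ <;>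
        rcases abs_cases (1 - α * L) with ⟨h2, h2'⟩ | ⟨h2, h2'⟩ <;> rw [h1, h2]
      · rw [max_eq_left (by linarith), max_eq_left (by linarith)]
      · rw [neg_sub]
      · exfalso; linarith
      · rw [max_eq_right (by linarith), max_eq_right (by linarith), neg_sub]
    have hr : (1 + ε) * ((L / μ - 1) / (L / μ + 1)) = (1 + ε) * ((L - μ) / (L + μ)) := by
      congr 1
      rw [div_eq_div_iff (by positivity : (0:ℝ) < L / μ + 1).ne' hS.ne']
      field_simp
    rw [key, hr]
    constructor
    · intro h
      rcases max_cases (1 - α * μ) (α * L - 1) with ⟨hm, hge⟩ | ⟨hm, hgt⟩ <;> rw [hm] at h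
      · left
        rw [eq_div_iff hS.ne', hk1]
        field_simp at h ⊢
        nlinarith [h]
      · right
        rw [eq_div_iff hS.ne', hk2]
        field_simp at h ⊢
        nlinarith [h]
    · rintro (h | h) <;> subst h
      · rw [hk1]
        have e1 : 1 - (2 - ε * ((L - μ) / μ)) / (L + μ) * μ = (1 + ε) * ((L - μ) / (L + μ)) := by
          field_simp
          ring
        have le1 : (2 - ε * ((L - μ) / μ)) / (L + μ) * L - 1 ≤
            1 - (2 - ε * ((L - μ) / μ)) / (L + μ) * μ := by
          have : (2 - ε * ((L - μ) / μ)) / (L + μ) * (L + μ) ≤ 2 := by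
            rw [div_mul_cancel₀ _ hS.ne']
            have : 0 ≤ ε * ((L - μ) / μ) := by positivity
            linarith
          linarith [this]
        rw [max_eq_left le1, e1]
      · rw [hk2]
        have e2 : (2 + ε * (L - μ) / L) / (L + μ) * L - 1 = (1 + ε) * ((L - μ) / (L + μ)) := by
          field_simp
          ring
        have le2 : 1 - (2 + ε * (L - μ) / L) / (L + μ) * μ ≤
            (2 + ε * (L - μ) / L) / (L + μ) * L - 1 := by
          have : 2 ≤ (2 + ε * (L - μ) / L) / (L + μ) * (L + μ) := by
            rw [div_mul_cancel₀ _ hS.ne']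
            have : 0 ≤ ε * (L - μ) / L := by positivity
            linarith
          linarith [this]
        rw [max_eq_right le2, e2]
end
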